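/- arXiv:2009.12427 — 2 statements merged into one kernel-verified Lean document; each statement's English description precedes it below -/
import Mathlib

section
/- Let R > 0 and let L₁, L₂, L₃, L₄ be the four explicit closed line segments in ℝ³ defined in the context. If 0 < r < R/(4√(5 + 2√2)), then the four closed tubes Nᵢ = {x ∈ ℝ³ : d(x, Lᵢ) ≤ √2·r}, for i = 1, …, 4, are pairwise disjoint. -/
noncomputable section

/-- ℝ³ with the Euclidean metric. -/
abbrev E3 := EuclideanSpace ℝ (Fin 3)

/-- The closed segment `{p + t • v : 0 ≤ t ≤ √2 R}`. -/
def seg (p v : E3) (R : ℝ) : Set E3 :=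
  {x | ∃ t : ℝ, 0 ≤ t ∧ t ≤ Real.sqrt 2 * R ∧ x = p + t • v}

/-- The four segments `L₁, L₂, L₃, L₄` (indexed by `Fin 4`). -/
def L (R : ℝ) : Fin 4 → Set E3
  | 0 => seg !₂[3 * Real.sqrt 2 * R / 4, 0, 0]
        !₂[-1, Real.sqrt (2 + Real.sqrt 2) / 2, Real.sqrt (2 - Real.sqrt 2) / 2] R
  | 1 => seg !₂[5 * Real.sqrt 2 * R / 4, 0, 0]
        !₂[-1, -(Real.sqrt (2 + Real.sqrt 2) / 2), Real.sqrt (2 - Real.sqrt 2) / 2] R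
  | 2 => seg !₂[0, Real.sqrt 2 * R / 4, 0]
        !₂[-(Real.sqrt (2 - Real.sqrt 2) / 2), -1, Real.sqrt (2 + Real.sqrt 2) / 2] R
  | 3 => seg !₂[0, -(Real.sqrt 2 * R / 4), 0]
        !₂[Real.sqrt (2 - Real.sqrt 2) / 2, 1, Real.sqrt (2 + Real.sqrt 2) / 2] R

/-- The closed tube of radius `√2 r` around the segment `L R i`. -/
def tube (R r : ℝ) (i : Fin 4) : Set E3 :=
  {x | Metric.infDist x (L R i) ≤ Real.sqrt 2 * r}

/-!
A common point of two tubes is within `√2 r` of both segments, so it suffices that points `y, z`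
on different segments satisfy `dist y z ≥ R / √(10 + 4√2) > 2√2 r`. This already holds for the
lines carrying the segments: if they are `p + t v` and `q + s w` and `n = v × w`, then
`⟪n, y - z⟫ = ⟪n, p - q⟫`, so Cauchy–Schwarz and Lagrange's identity
`‖v × w‖² = ‖v‖² ‖w‖² - ⟪v, w⟫²` give `dist y z ^ 2 ≥ ⟪n, p - q⟫² / (‖v‖² ‖w‖² - ⟪v, w⟫²)`,
and for each of the six pairs of lines the right-hand side is at least `R² / (10 + 4√2)`.
-/

open Matrix WithLp Metric
open scoped RealInnerProductSpace

theorem Metric.disjoint_infDist_le {X : Type*} [PseudoMetricSpace X] {s t : Set X}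
    (hs : s.Nonempty) (ht : t.Nonempty) {a b d : ℝ} (hd : ∀ y ∈ s, ∀ z ∈ t, d ≤ dist y z)
    (hab : a + b < d) : Disjoint {x | infDist x s ≤ a} {x | infDist x t ≤ b} := by
  refine Set.disjoint_left.2 fun x (hxs : infDist x s ≤ a) (hxt : infDist x t ≤ b) => ?_
  have : d - b ≤ infDist x s := (le_infDist hs).2 fun y hy => by
    have hyt : d ≤ infDist y t := (le_infDist ht).2 (hd y hy)
    linarith [infDist_le_infDist_add_dist (x := y) (y := x) (s := t), dist_comm x y]
  linarith

section LineDistance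

variable {F : Type*} [NormedAddCommGroup F] [InnerProductSpace ℝ F]

theorem inner_sq_le_norm_sq_mul_dist_sq {n v w : F} (hv : ⟪n, v⟫ = 0) (hw : ⟪n, w⟫ = 0)
    (p q : F) (t s : ℝ) : ⟪n, p - q⟫ ^ 2 ≤ ‖n‖ ^ 2 * dist (p + t • v) (q + s • w) ^ 2 := by
  have h : ⟪n, p + t • v - (q + s • w)⟫ = ⟪n, p - q⟫ := by
    simp only [inner_sub_right, inner_add_right, inner_smul_right, hv, hw]
    ring
  rw [dist_eq_norm, ← h, ← mul_pow, sq_le_sq]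
  exact (abs_real_inner_le_norm _ _).trans (le_abs_self _)

theorem sq_le_mul_dist_sq_of_inner_eq_zero {n v w p q : F} {R K T : ℝ} (hn : n ≠ 0)
    (hv : ⟪n, v⟫ = 0) (hw : ⟪n, w⟫ = 0) (hT : ⟪n, p - q⟫ = T * R) (hK : ‖n‖ ^ 2 ≤ K * T ^ 2)
    (t s : ℝ) : R ^ 2 ≤ K * dist (p + t • v) (q + s • w) ^ 2 := by
  have hn2 : 0 < ‖n‖ ^ 2 := pow_pos (norm_pos_iff.2 hn) 2
  have hK0 : 0 ≤ K := by nlinarith [sq_nonneg T]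
  have hCS := inner_sq_le_norm_sq_mul_dist_sq hv hw p q t s
  rw [hT] at hCS
  refine le_of_mul_le_mul_left ?_ hn2
  calc ‖n‖ ^ 2 * R ^ 2 ≤ K * T ^ 2 * R ^ 2 := by gcongr
    _ = K * (T * R) ^ 2 := by ring
    _ ≤ K * (‖n‖ ^ 2 * dist (p + t • v) (q + s • w) ^ 2) := by gcongr
    _ = ‖n‖ ^ 2 * (K * dist (p + t • v) (q + s • w) ^ 2) := by ring

end LineDistance

namespace E3

theorem inner_cross_left (v w : E3) : ⟪toLp 2 (ofLp v ⨯₃ ofLp w), v⟫ = 0 := by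
  simp [EuclideanSpace.inner_eq_star_dotProduct, dot_self_cross]

theorem inner_cross_right (v w : E3) : ⟪toLp 2 (ofLp v ⨯₃ ofLp w), w⟫ = 0 := by
  simp [EuclideanSpace.inner_eq_star_dotProduct, dot_cross_self]

theorem norm_cross_sq (v w : E3) :
    ‖toLp 2 (ofLp v ⨯₃ ofLp w)‖ ^ 2 = ‖v‖ ^ 2 * ‖w‖ ^ 2 - ⟪v, w⟫ ^ 2 := by
  simp only [← real_inner_self_eq_norm_sq, EuclideanSpace.inner_eq_star_dotProduct, star_trivial,
    cross_dot_cross, dotProduct_comm (ofLp w) (ofLp v)]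
  ring

theorem norm_sq_toLp (a b c : ℝ) : ‖!₂[a, b, c]‖ ^ 2 = a ^ 2 + b ^ 2 + c ^ 2 := by
  simp [EuclideanSpace.norm_sq_eq, Fin.sum_univ_three]

theorem inner_toLp (a b c a' b' c' : ℝ) :
    ⟪!₂[a, b, c], !₂[a', b', c']⟫ = a * a' + b * b' + c * c' := by
  simp [EuclideanSpace.inner_toLp_toLp, mul_comm, add_assoc]

theorem toLp_cross (a b c a' b' c' : ℝ) :
    toLp 2 (![a, b, c] ⨯₃ ![a', b', c']) =
      !₂[b * c' - c * b', c * a' - a * c', a * b' - b * a'] := by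
  simp [cross_apply]

theorem toLp_sub_toLp (a b c a' b' c' : ℝ) :
    !₂[a, b, c] - !₂[a', b', c'] = !₂[a - a', b - b', c - c'] := by
  ext i; fin_cases i <;> simp

theorem sq_le_mul_dist_add_smul_sq {p q v w : E3} {R K N g T : ℝ}
    (hN : ‖v‖ ^ 2 * ‖w‖ ^ 2 = N) (hg : ⟪v, w⟫ = g)
    (hT : ⟪toLp 2 (ofLp v ⨯₃ ofLp w), p - q⟫ = T * R) (hgN : g ^ 2 < N) (hK : N - g ^ 2 ≤ K * T ^ 2)
    (t s : ℝ) : R ^ 2 ≤ K * dist (p + t • v) (q + s • w) ^ 2 := by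
  have hn : ‖toLp 2 (ofLp v ⨯₃ ofLp w)‖ ^ 2 = N - g ^ 2 := by rw [norm_cross_sq, hN, hg]
  refine sq_le_mul_dist_sq_of_inner_eq_zero ?_ (inner_cross_left v w) (inner_cross_right v w) hT
    (hn ▸ hK) t s
  intro h0
  rw [h0, norm_zero] at hn
  linarith

end E3

theorem Real.sqrt_two_add_sqrt_two_mul_sqrt_two_sub_sqrt_two :
    √(2 + √2) * √(2 - √2) = √2 := by
  rw [← Real.sqrt_mul (by positivity)]
  congr 1
  linear_combination -Real.sq_sqrt zero_le_two

/-- The pairs `(L₁, L₂)` and `(L₃, L₄)` attain the bound; for the four other pairs the crude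
estimate `‖v × w‖² ≤ ‖v‖² ‖w‖² = 4` already suffices. -/
theorem sq_le_mul_dist_sq_of_mem_L {R : ℝ} {i j : Fin 4} (hij : i < j) {y z : E3}
    (hy : y ∈ L R i) (hz : z ∈ L R j) : R ^ 2 ≤ (10 + 4 * √2) * dist y z ^ 2 := by
  have hc : √2 ^ 2 = 2 := Real.sq_sqrt zero_le_two
  have hc1 : 1.41 < √2 := Real.lt_sqrt_of_sq_lt (by norm_num)
  have hc2 : √2 < 1.42 := (Real.sqrt_lt' (by norm_num)).2 (by norm_num)
  have hA : √(2 + √2) ^ 2 = 2 + √2 := Real.sq_sqrt (by positivity)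
  have hB : √(2 - √2) ^ 2 = 2 - √2 := Real.sq_sqrt (by linarith)
  have hAB := Real.sqrt_two_add_sqrt_two_mul_sqrt_two_sub_sqrt_two
  have hA1 : 1.84 < √(2 + √2) := Real.lt_sqrt_of_sq_lt (by norm_num; linarith)
  have hA2 : √(2 + √2) < 1.85 := (Real.sqrt_lt' (by norm_num)).2 (by norm_num; linarith)
  have hB1 : 0.76 < √(2 - √2) := Real.lt_sqrt_of_sq_lt (by norm_num; linarith)
  have hB2 : √(2 - √2) < 0.77 := (Real.sqrt_lt' (by norm_num)).2 (by norm_num; linarith)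
  have hcA : 2.59 < √2 * √(2 + √2) ∧ √2 * √(2 + √2) < 2.63 := ⟨by nlinarith, by nlinarith⟩
  have hcB : 1.07 < √2 * √(2 - √2) ∧ √2 * √(2 - √2) < 1.1 := ⟨by nlinarith, by nlinarith⟩
  have sq_lt_four (g : ℝ) (h₁ : -2 < g) (h₂ : g < 2) : g ^ 2 < 4 := by nlinarith
  have transversal (g T : ℝ) (hT : 2 / 3 ≤ |T|) : 4 - g ^ 2 ≤ (10 + 4 * √2) * T ^ 2 := by
    nlinarith [sq_abs T, sq_nonneg g]
  fin_cases i <;> fin_cases j <;> simp only [Fin.lt_def] at hij <;> (try omega) <;>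
    simp only [L] at hy hz <;> obtain ⟨t, -, -, rfl⟩ := hy <;> obtain ⟨s, -, -, rfl⟩ := hz <;>
    set A := √(2 + √2) <;> set B := √(2 - √2) <;> set c := √2
  · refine E3.sq_le_mul_dist_add_smul_sq (N := 4) (g := 1 - c / 2) (T := -1 / 2) ?_ ?_ ?_
      (sq_lt_four _ (by linarith) (by linarith)) (by linear_combination (-1 / 4) * hc) t s <;>
      simp only [E3.norm_sq_toLp, E3.inner_toLp, E3.toLp_cross, E3.toLp_sub_toLp] <;> grind
  · refine E3.sq_le_mul_dist_add_smul_sq (N := 4) (g := (B - A) / 2 + c / 4)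
      (T := (2 * c + 1) / 4 + c * (3 * B - A) / 8) ?_ ?_ ?_ (sq_lt_four _ (by linarith) (by linarith))
      (transversal _ _ (le_abs.2 (.inl (by linarith)))) t s <;>
      simp only [E3.norm_sq_toLp, E3.inner_toLp, E3.toLp_cross, E3.toLp_sub_toLp] <;> grind
  · refine E3.sq_le_mul_dist_add_smul_sq (N := 4) (g := (A - B) / 2 + c / 4)
      (T := (2 * c + 1) / 4 + c * (A - 3 * B) / 8) ?_ ?_ ?_ (sq_lt_four _ (by linarith) (by linarith))
      (transversal _ _ (le_abs.2 (.inl (by linarith)))) t s <;>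
      simp only [E3.norm_sq_toLp, E3.inner_toLp, E3.toLp_cross, E3.toLp_sub_toLp] <;> grind
  · refine E3.sq_le_mul_dist_add_smul_sq (N := 4) (g := (A + B) / 2 + c / 4)
      (T := -(2 * c + 3) / 4 + c * (5 * B - A) / 8) ?_ ?_ ?_ (sq_lt_four _ (by linarith) (by linarith))
      (transversal _ _ (le_abs.2 (.inr (by linarith)))) t s <;>
      simp only [E3.norm_sq_toLp, E3.inner_toLp, E3.toLp_cross, E3.toLp_sub_toLp] <;> grind
  · refine E3.sq_le_mul_dist_add_smul_sq (N := 4) (g := -(A + B) / 2 + c / 4)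
      (T := -(2 * c + 3) / 4 - c * (5 * B - A) / 8) ?_ ?_ ?_ (sq_lt_four _ (by linarith) (by linarith))
      (transversal _ _ (le_abs.2 (.inr (by linarith)))) t s <;>
      simp only [E3.norm_sq_toLp, E3.inner_toLp, E3.toLp_cross, E3.toLp_sub_toLp] <;> grind
  · refine E3.sq_le_mul_dist_add_smul_sq (N := 4) (g := c / 2 - 1) (T := 1 / 2) ?_ ?_ ?_
      (sq_lt_four _ (by linarith) (by linarith)) (by linear_combination (-1 / 4) * hc) t s <;>
      simp only [E3.norm_sq_toLp, E3.inner_toLp, E3.toLp_cross, E3.toLp_sub_toLp] <;> grind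

theorem div_le_dist_of_mem_L {R : ℝ} (hR : 0 ≤ R) {i j : Fin 4} (hij : i ≠ j) {y z : E3}
    (hy : y ∈ L R i) (hz : z ∈ L R j) : R / (√2 * √(5 + 2 * √2)) ≤ dist y z := by
  have key : R ^ 2 ≤ (10 + 4 * √2) * dist y z ^ 2 := by
    rcases hij.lt_or_gt with h | h
    · exact sq_le_mul_dist_sq_of_mem_L h hy hz
    · rw [dist_comm]
      exact sq_le_mul_dist_sq_of_mem_L h hz hy
  have hK : (√2 * √(5 + 2 * √2)) ^ 2 = 10 + 4 * √2 := by
    rw [mul_pow, Real.sq_sqrt zero_le_two, Real.sq_sqrt (by positivity)]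
    ring
  rw [div_le_iff₀ (by positivity), ← sq_le_sq₀ hR (by positivity), mul_pow, hK, mul_comm]
  exact key

theorem seg_nonempty (p v : E3) {R : ℝ} (hR : 0 ≤ R) : (seg p v R).Nonempty :=
  ⟨p, 0, le_rfl, by positivity, by simp⟩

theorem L_nonempty {R : ℝ} (hR : 0 ≤ R) (i : Fin 4) : (L R i).Nonempty := by
  fin_cases i <;> exact seg_nonempty _ _ hR

theorem tubes_pairwise_disjoint_general (R r : ℝ) (hR : 0 < R)
    (hrR : r < R / (4 * Real.sqrt (5 + 2 * Real.sqrt 2))) :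
    ∀ i j : Fin 4, i ≠ j → Disjoint (tube R r i) (tube R r j) := by
  intro i j hij
  refine disjoint_infDist_le (L_nonempty hR.le i) (L_nonempty hR.le j)
    (fun y hy z hz => div_le_dist_of_mem_L hR.le hij hy hz) ?_
  rw [lt_div_iff₀ (by positivity)] at hrR ⊢
  have h2 : √2 * √2 = 2 := Real.mul_self_sqrt zero_le_two
  calc (√2 * r + √2 * r) * (√2 * √(5 + 2 * √2)) = r * (4 * √(5 + 2 * √2)) := by
        linear_combination (2 * r * √(5 + 2 * √2)) * h2
    _ < R := hrR

theorem tubes_pairwise_disjoint (R r : ℝ) (hR : 0 < R) (hr : 0 < r)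
    (hrR : r < R / (4 * Real.sqrt (5 + 2 * Real.sqrt 2))) :
    ∀ i j : Fin 4, i ≠ j → Disjoint (tube R r i) (tube R r j) :=
  tubes_pairwise_disjoint_general R r hR hrR
end
end

section
/- Let h : ℝ³ → ℝ³ be a homeomorphism and set γ₁ = h(C₁), γ₂ = h(C₂), so that (γ₁, γ₂) forms a Hopf link. Let B = k(B̄(0,1)) for some homeomorphism k : ℝ³ → ℝ³ (a tamely embedded closed topological ball), and suppose γ₁ ∪ γ₂ ⊆ interior(B). Let g : D² → ℝ³ be continuous and injective with g(cos s, sin s) = h(cos s, sin s, 0) for all s ∈ ℝ, and let D = g(D²) (a filling disk of γ₁). Then D ∩ γ₂ ≠ ∅, and the set D ∩ ∂B does not separate γ₁ from γ₂ ∩ D in D; precisely, there exists a connected set S ⊆ D such that S ∩ ∂B = ∅, S ∩ γ₁ ≠ ∅ and S ∩ γ₂ ≠ ∅ (here ∂B denotes the topological frontier of B). -/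
noncomputable section

/-- ℝ² with the Euclidean metric. -/
abbrev E2 := EuclideanSpace ℝ (Fin 2)

/-- The standard round unit circle in the x₁x₂-plane. -/
def C1 : Set E3 := {x | ∃ s : ℝ, x = ![Real.cos s, Real.sin s, 0]}

/-- The standard Hopf partner circle. -/
def C2 : Set E3 := {x | ∃ s : ℝ, x = ![1 + Real.cos s, 0, Real.sin s]}

/-- The closed unit disk `D² ⊆ ℝ²`. -/
def D2 : Set E2 := Metric.closedBall 0 1

/-!
Put `ζ(y) = (1 - ‖(y₀ - 1, y₂)‖) + i y₁`. It vanishes exactly on `C₂`, and along `C₁` it is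
`s ↦ e^{is}`, a loop winding once around `0`. Extend `g` to the plane through the radial retraction
onto `D²` and let `F = ζ ∘ h⁻¹ ∘ g : ℝ² → ℂ`; then `F = e^{is}` on `∂D²`, and `F` vanishes exactly
on `g⁻¹(γ₂)`.

Let `U` be the component of `g⁻¹(int B)` containing `∂D²`. If `F` had no zero in `U`, every zero
would lie in `Ω = ℝ² \ cl U`, while `g` maps `∂Ω` outside `int B = k(ball 0 1)`. Off the open unit
ball of `ℝ³` the map `ζ ∘ h⁻¹ ∘ k` does not vanish and has a continuous logarithm: the sphere is the
union of two hemispheres, each a graph over a disk, glued along the connected equator, and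
`{‖q‖ ≥ 1}` retracts onto it. So `F` has a logarithm `L` on `∂Ω`, and replacing `F` on `cl Ω` by
`exp ∘ L̃`, for a Tietze extension `L̃` of `L`, gives a map without zeros on `D²` that still equals
`e^{is}` on `∂D²`, which cannot be. Thus `S = g(U)` meets `γ₂`.
-/

open Complex Metric Set

theorem exists_continuousOn_log_of_convex {E : Type*} [NormedAddCommGroup E] [NormedSpace ℝ E]
    {s : Set E} (hs : Convex ℝ s) {f : E → ℂ} (hf : ContinuousOn f s) (hf0 : ∀ x ∈ s, f x ≠ 0) :
    ∃ L : E → ℂ, ContinuousOn L s ∧ ∀ x ∈ s, exp (L x) = f x := by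
  classical
  rcases s.eq_empty_or_nonempty with rfl | ⟨x₀, hx₀⟩
  · exact ⟨0, continuousOn_empty _, by simp⟩
  have := hs.contractibleSpace ⟨x₀, hx₀⟩
  have := hs.locallyPathConnectedSpace
  obtain ⟨L, ⟨-, hL⟩, -⟩ := isCoveringMapOn_exp.existsUnique_continuousMap_lifts
    ⟨s.domRestrict f, hf.domRestrict⟩ (a₀ := ⟨x₀, hx₀⟩) (exp_log (hf0 x₀ hx₀)) (fun x => hf0 x x.2)
  refine ⟨fun x => if hx : x ∈ s then L ⟨x, hx⟩ else 0, ?_, fun x hx => ?_⟩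
  · rw [continuousOn_iff_continuous_domRestrict]
    convert L.continuous using 1
    funext x
    simp [x.2]
  · simpa [hx] using congrFun hL ⟨x, hx⟩

theorem IsPreconnected.exists_int_of_exp_eq_exp {X : Type*} [TopologicalSpace X] {s : Set X}
    (hs : IsPreconnected s) {L₁ L₂ : X → ℂ} (h₁ : ContinuousOn L₁ s) (h₂ : ContinuousOn L₂ s)
    (h : ∀ x ∈ s, exp (L₁ x) = exp (L₂ x)) :
    ∃ n : ℤ, ∀ x ∈ s, L₁ x = L₂ x + n * (2 * Real.pi * I) := by
  have hmem : MapsTo (fun x => L₁ x - L₂ x) s (AddSubgroup.zmultiples (2 * Real.pi * I)) := by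
    intro x hx
    obtain ⟨n, hn⟩ := exp_eq_exp_iff_exists_int.1 (h x hx)
    exact ⟨n, by simp [hn]⟩
  obtain ⟨-, ⟨n, rfl⟩, hn⟩ := hs.eqOn_const_of_mapsTo
    (SetLike.isDiscrete_iff_discreteTopology.2 inferInstance) (h₁.sub h₂) hmem ⟨0, zero_mem _⟩
  refine ⟨n, fun x hx => ?_⟩
  have := hn hx
  simp only [Function.const_apply, zsmul_eq_mul, Pi.sub_apply] at this
  linear_combination this

theorem exists_continuousOn_log_of_homotopy {X : Type*} [TopologicalSpace X] {s : Set X}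
    {H : ℝ × X → ℂ} (hH : ContinuousOn H (Icc 0 1 ×ˢ s))
    (hH0 : ∀ p ∈ Icc 0 1 ×ˢ s, H p ≠ 0) {L₀ : X → ℂ} (hL₀ : ContinuousOn L₀ s)
    (hexp : ∀ x ∈ s, exp (L₀ x) = H (0, x)) :
    ∃ L : X → ℂ, ContinuousOn L s ∧ ∀ x ∈ s, exp (L x) = H (1, x) := by
  classical
  let H' : C(unitInterval × s, {z : ℂ // z ≠ 0}) :=
    ⟨fun p => ⟨H (p.1, p.2), hH0 _ ⟨p.1.2, p.2.2⟩⟩,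
      (hH.comp_continuous (by fun_prop) fun p => ⟨p.1.2, p.2.2⟩).subtype_mk _⟩
  obtain ⟨Λ, hΛ⟩ : ∃ Λ : C(unitInterval × s, ℂ), (fun z => ⟨exp z, exp_ne_zero z⟩) ∘ Λ = H' :=
    ⟨_, isCoveringMap_exp.liftHomotopy_lifts H' ⟨s.domRestrict L₀, hL₀.domRestrict⟩
      fun x => Subtype.ext (hexp x x.2).symm⟩
  refine ⟨fun x => if hx : x ∈ s then Λ (1, ⟨x, hx⟩) else 0, ?_, fun x hx => ?_⟩
  · rw [continuousOn_iff_continuous_domRestrict]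
    convert Λ.continuous.comp (Continuous.prodMk_right (1 : unitInterval)) using 1
    funext x
    simp [x.2]
  · simp only [dif_pos hx]
    exact congrArg Subtype.val (congrFun hΛ (1, ⟨x, hx⟩))

theorem exists_continuousOn_log_union {X : Type*} [TopologicalSpace X] {s t : Set X}
    (hs : IsClosed s) (ht : IsClosed t) (hst : IsPreconnected (s ∩ t)) {f L₁ L₂ : X → ℂ}
    (h₁ : ContinuousOn L₁ s) (h₂ : ContinuousOn L₂ t) (he₁ : ∀ x ∈ s, exp (L₁ x) = f x)
    (he₂ : ∀ x ∈ t, exp (L₂ x) = f x) :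
    ∃ L : X → ℂ, ContinuousOn L (s ∪ t) ∧ ∀ x ∈ s ∪ t, exp (L x) = f x := by
  classical
  obtain ⟨n, hn⟩ := hst.exists_int_of_exp_eq_exp (h₁.mono inter_subset_left)
    (h₂.mono inter_subset_right) fun x hx => (he₁ x hx.1).trans (he₂ x hx.2).symm
  refine ⟨s.piecewise L₁ fun x => L₂ x + n * (2 * Real.pi * I), ?_, ?_⟩
  · refine ContinuousOn.union_of_isClosed (h₁.congr fun x hx => piecewise_eq_of_mem _ _ _ hx)
      ((h₂.add continuousOn_const : ContinuousOn (fun x => L₂ x + n * (2 * Real.pi * I)) t).congr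
        fun x hx => ?_) hs ht
    by_cases hxs : x ∈ s
    · simpa [hxs] using hn x ⟨hxs, hx⟩
    · simp [hxs]
  · rintro x (hx | hx)
    · simpa [hx] using he₁ x hx
    · by_cases hxs : x ∈ s
      · simpa [hxs] using he₁ x hxs
      · simpa [hxs, exp_add] using he₂ x hx

theorem closure_inter_subset_connectedComponentIn {X : Type*} [TopologicalSpace X]
    [LocallyConnectedSpace X] {W : Set X} (hW : IsOpen W) (x : X) :
    closure (connectedComponentIn W x) ∩ W ⊆ connectedComponentIn W x := by
  rintro y ⟨hy, hyW⟩
  obtain ⟨z, hzy, hzx⟩ := mem_closure_iff.1 hy _ hW.connectedComponentIn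
    (mem_connectedComponentIn hyW)
  rw [connectedComponentIn_eq hzx, ← connectedComponentIn_eq hzy]
  exact mem_connectedComponentIn hyW

section Retraction

variable {E : Type*} [NormedAddCommGroup E] [NormedSpace ℝ E]

def radialRetraction (x : E) : E := (max 1 ‖x‖)⁻¹ • x

theorem continuous_radialRetraction : Continuous (radialRetraction (E := E)) :=
  ((continuous_const.max continuous_norm).inv₀ fun _ =>
    (one_pos.trans_le (le_max_left _ _)).ne').smul continuous_id

theorem radialRetraction_mem_closedBall (x : E) : radialRetraction x ∈ closedBall (0 : E) 1 := by
  have hpos : 0 < max 1 ‖x‖ := one_pos.trans_le (le_max_left _ _)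
  rw [mem_closedBall_zero_iff, radialRetraction, norm_smul, norm_inv, Real.norm_of_nonneg hpos.le,
    inv_mul_le_one₀ hpos]
  exact le_max_right _ _

theorem radialRetraction_of_mem_closedBall {x : E} (hx : x ∈ closedBall (0 : E) 1) :
    radialRetraction x = x := by
  simp [radialRetraction, max_eq_left (mem_closedBall_zero_iff.1 hx)]

end Retraction

theorem norm_sq_E2 (y : E2) : ‖y‖ ^ 2 = y 0 ^ 2 + y 1 ^ 2 := by
  simp [EuclideanSpace.norm_sq_eq, Fin.sum_univ_two]

theorem norm_sq_E3 (x : E3) : ‖x‖ ^ 2 = x 0 ^ 2 + x 1 ^ 2 + x 2 ^ 2 := by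
  simp [EuclideanSpace.norm_sq_eq, Fin.sum_univ_three]

def hemisphereGraph (σ : ℝ) (y : E2) : E3 :=
  WithLp.toLp 2 ![y 0, y 1, σ * √(1 - (y 0 ^ 2 + y 1 ^ 2))]

def horizontalProj (x : E3) : E2 := WithLp.toLp 2 ![x 0, x 1]

theorem continuous_hemisphereGraph (σ : ℝ) : Continuous (hemisphereGraph σ) := by
  unfold hemisphereGraph; fun_prop

theorem continuous_horizontalProj : Continuous horizontalProj := by
  unfold horizontalProj; fun_prop

theorem hemisphereGraph_mem_sphere {σ : ℝ} (hσ : σ ^ 2 = 1) {y : E2}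
    (hy : y ∈ closedBall (0 : E2) 1) : hemisphereGraph σ y ∈ sphere (0 : E3) 1 := by
  have hy' : y 0 ^ 2 + y 1 ^ 2 ≤ 1 := by
    rw [← norm_sq_E2]; exact pow_le_one₀ (norm_nonneg y) (mem_closedBall_zero_iff.1 hy)
  rw [mem_sphere_zero_iff_norm, ← pow_eq_one_iff_of_nonneg (norm_nonneg _) two_ne_zero, norm_sq_E3]
  simp [hemisphereGraph, mul_pow, hσ, Real.sq_sqrt (sub_nonneg.2 hy')]

theorem norm_sq_horizontalProj (x : E3) : ‖horizontalProj x‖ ^ 2 = x 0 ^ 2 + x 1 ^ 2 := by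
  simp [norm_sq_E2, horizontalProj]

theorem horizontalProj_mem_closedBall {x : E3} (hx : x ∈ sphere (0 : E3) 1) :
    horizontalProj x ∈ closedBall (0 : E2) 1 := by
  have hx' := norm_sq_E3 x
  rw [mem_sphere_zero_iff_norm.1 hx] at hx'
  rw [mem_closedBall_zero_iff, ← sq_le_one_iff₀ (norm_nonneg _), norm_sq_horizontalProj]
  nlinarith [sq_nonneg (x 2)]

theorem hemisphereGraph_horizontalProj {σ : ℝ} (hσ : σ ^ 2 = 1) {x : E3}
    (hx : x ∈ sphere (0 : E3) 1) (hσx : 0 ≤ σ * x 2) :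
    hemisphereGraph σ (horizontalProj x) = x := by
  have hx' := norm_sq_E3 x
  rw [mem_sphere_zero_iff_norm.1 hx] at hx'
  have h2 : √(1 - (x 0 ^ 2 + x 1 ^ 2)) = σ * x 2 := by
    rw [show 1 - (x 0 ^ 2 + x 1 ^ 2) = (σ * x 2) ^ 2 by rw [mul_pow, hσ]; linarith,
      Real.sqrt_sq hσx]
  ext i
  fin_cases i
  · rfl
  · rfl
  · simp [hemisphereGraph, horizontalProj, h2, ← mul_assoc, ← sq, hσ]

theorem exists_continuousOn_log_hemisphere {G : E3 → ℂ} (hG : ContinuousOn G (sphere 0 1))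
    (hG0 : ∀ x ∈ sphere (0 : E3) 1, G x ≠ 0) {σ : ℝ} (hσ : σ ^ 2 = 1) :
    ∃ L : E3 → ℂ, ContinuousOn L {x ∈ sphere 0 1 | 0 ≤ σ * x 2} ∧
      ∀ x ∈ {x ∈ sphere (0 : E3) 1 | 0 ≤ σ * x 2}, exp (L x) = G x := by
  obtain ⟨L, hL, hexp⟩ := exists_continuousOn_log_of_convex (convex_closedBall (0 : E2) 1)
    (hG.comp (continuous_hemisphereGraph σ).continuousOn fun _ hy =>
      hemisphereGraph_mem_sphere hσ hy)
    fun y hy => hG0 _ (hemisphereGraph_mem_sphere hσ hy)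
  refine ⟨L ∘ horizontalProj, hL.comp continuous_horizontalProj.continuousOn
    fun x hx => horizontalProj_mem_closedBall hx.1, fun x hx => ?_⟩
  simpa [hemisphereGraph_horizontalProj hσ hx.1 hx.2] using
    hexp _ (horizontalProj_mem_closedBall hx.1)

theorem isPreconnected_equator :
    IsPreconnected ({x ∈ sphere (0 : E3) 1 | 0 ≤ 1 * x 2} ∩ {x ∈ sphere 0 1 | 0 ≤ -1 * x 2}) := by
  have : {x ∈ sphere (0 : E3) 1 | 0 ≤ 1 * x 2} ∩ {x ∈ sphere 0 1 | 0 ≤ -1 * x 2} =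
      hemisphereGraph 1 '' sphere 0 1 := by
    ext x
    constructor
    · rintro ⟨⟨hx, h₁⟩, -, h₂⟩
      refine ⟨horizontalProj x, ?_, hemisphereGraph_horizontalProj (one_pow 2) hx h₁⟩
      have hx' := norm_sq_E3 x
      rw [mem_sphere_zero_iff_norm.1 hx, show x 2 = 0 by linarith] at hx'
      rw [mem_sphere_zero_iff_norm, ← pow_eq_one_iff_of_nonneg (norm_nonneg _) two_ne_zero,
        norm_sq_horizontalProj]
      linarith
    · rintro ⟨y, hy, rfl⟩
      have hy' := norm_sq_E2 y
      rw [mem_sphere_zero_iff_norm.1 hy] at hy'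
      have h₀ : (hemisphereGraph 1 y) 2 = 0 := by simp [hemisphereGraph, ← hy']
      have hmem := hemisphereGraph_mem_sphere (one_pow 2) (sphere_subset_closedBall hy)
      exact ⟨⟨hmem, by simp [h₀]⟩, hmem, by simp [h₀]⟩
  rw [this]
  exact ((isConnected_sphere (by simp [← Module.finrank_eq_rank]) 0 zero_le_one).image _
    (continuous_hemisphereGraph 1).continuousOn).isPreconnected

theorem exists_continuousOn_log_sphere {G : E3 → ℂ} (hG : ContinuousOn G (sphere 0 1))
    (hG0 : ∀ x ∈ sphere (0 : E3) 1, G x ≠ 0) :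
    ∃ L : E3 → ℂ, ContinuousOn L (sphere 0 1) ∧ ∀ x ∈ sphere (0 : E3) 1, exp (L x) = G x := by
  have hclosed (σ : ℝ) : IsClosed {x ∈ sphere (0 : E3) 1 | 0 ≤ σ * x 2} :=
    isClosed_sphere.inter
      (isClosed_le continuous_const (by fun_prop : Continuous fun x : E3 => σ * x 2))
  have hcover : {x ∈ sphere (0 : E3) 1 | 0 ≤ 1 * x 2} ∪ {x ∈ sphere 0 1 | 0 ≤ -1 * x 2} =
      sphere 0 1 := by
    ext x
    simp only [mem_union, mem_ofPred_eq, one_mul, neg_one_mul, neg_nonneg, ← and_or_left,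
      and_iff_left_iff_imp]
    exact fun _ => le_total 0 (x 2)
  obtain ⟨L₁, hL₁, he₁⟩ := exists_continuousOn_log_hemisphere hG hG0 (one_pow 2)
  obtain ⟨L₂, hL₂, he₂⟩ := exists_continuousOn_log_hemisphere hG hG0 (σ := -1) (by norm_num)
  rw [← hcover]
  exact exists_continuousOn_log_union (hclosed 1) (hclosed (-1)) isPreconnected_equator
    hL₁ hL₂ he₁ he₂

theorem exists_continuousOn_log_compl_ball {Φ : E3 → ℂ} (hΦ : ContinuousOn Φ (ball 0 1)ᶜ)
    (hΦ0 : ∀ q ∉ ball (0 : E3) 1, Φ q ≠ 0) :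
    ∃ L : E3 → ℂ, ContinuousOn L (ball 0 1)ᶜ ∧ ∀ q ∉ ball (0 : E3) 1, exp (L q) = Φ q := by
  have hne : ∀ q ∈ (ball (0 : E3) 1)ᶜ, ‖q‖ ≠ 0 := fun q hq => by
    simp only [mem_compl_iff, mem_ball_zero_iff, not_lt] at hq; positivity
  set H : ℝ × E3 → E3 := fun p => ((1 - p.1) * ‖p.2‖⁻¹ + p.1) • p.2
  have hH : MapsTo H (Icc 0 1 ×ˢ (ball 0 1)ᶜ) (ball 0 1)ᶜ := by
    rintro ⟨t, q⟩ ⟨⟨ht₀, ht₁⟩, hq⟩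
    simp only [mem_compl_iff, mem_ball_zero_iff, not_lt] at hq ⊢
    rw [norm_smul, Real.norm_of_nonneg (by positivity), add_mul, mul_assoc,
      inv_mul_cancel₀ (by positivity), mul_one]
    nlinarith
  obtain ⟨M, hM, hMexp⟩ := exists_continuousOn_log_sphere
    (hΦ.mono fun q hq => by simp [mem_sphere_zero_iff_norm.1 hq])
    fun q hq => hΦ0 q (by simp [mem_sphere_zero_iff_norm.1 hq])
  have hproj : MapsTo (fun q : E3 => ‖q‖⁻¹ • q) (ball 0 1)ᶜ (sphere 0 1) := fun q hq => by
    simp [norm_smul, hne q hq]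
  have hHc : ContinuousOn H (Icc 0 1 ×ˢ (ball 0 1)ᶜ) :=
    (((continuousOn_const.sub continuousOn_fst).mul
      (continuousOn_snd.norm.inv₀ fun p hp => hne p.2 hp.2)).add continuousOn_fst).smul
      continuousOn_snd
  obtain ⟨L, hL, hLexp⟩ := exists_continuousOn_log_of_homotopy (H := Φ ∘ H) (hΦ.comp hHc hH)
    (fun p hp => hΦ0 _ (hH hp)) (L₀ := fun q => M (‖q‖⁻¹ • q))
    (hM.comp ((continuous_norm.continuousOn.inv₀ hne).smul continuousOn_id) hproj)
    (fun q hq => by simpa [H] using hMexp _ (hproj hq))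
  exact ⟨L, hL, fun q hq => by simpa [H] using hLexp q hq⟩

def planarCircle (s : ℝ) : E2 := WithLp.toLp 2 ![Real.cos s, Real.sin s]

theorem continuous_planarCircle : Continuous planarCircle := by
  unfold planarCircle; fun_prop

theorem planarCircle_mem_closedBall (s : ℝ) : planarCircle s ∈ closedBall (0 : E2) 1 := by
  simp [planarCircle, EuclideanSpace.norm_eq, Fin.sum_univ_two]

theorem planarCircle_two_pi : planarCircle (2 * Real.pi) = planarCircle 0 := by
  simp [planarCircle]

theorem exists_zero_of_eq_exp_on_circle {F : E2 → ℂ} (hF : ContinuousOn F (closedBall 0 1))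
    (hcirc : ∀ s, F (planarCircle s) = exp (s * I)) : ∃ x ∈ closedBall (0 : E2) 1, F x = 0 := by
  by_contra! hF0
  obtain ⟨L, hL, hexp⟩ := exists_continuousOn_log_of_convex (convex_closedBall 0 1) hF hF0
  obtain ⟨n, hn⟩ := isPreconnected_univ.exists_int_of_exp_eq_exp
    (hL.comp_continuous continuous_planarCircle planarCircle_mem_closedBall).continuousOn
    (by fun_prop : Continuous fun s : ℝ => (s : ℂ) * I).continuousOn
    fun s _ => (hexp _ (planarCircle_mem_closedBall s)).trans (hcirc s)
  have h2π := hn (2 * Real.pi) trivial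
  have h0 := hn 0 trivial
  simp only [Function.comp_apply, planarCircle_two_pi] at h2π h0
  rw [h0] at h2π
  simp [Real.pi_ne_zero, I_ne_zero] at h2π

theorem exists_zero_of_log_on_frontier {F : E2 → ℂ} (hF : Continuous F)
    (hcirc : ∀ s, F (planarCircle s) = exp (s * I)) {Ω : Set E2}
    (hΩ : ∀ s, planarCircle s ∉ closure Ω) {L : E2 → ℂ} (hL : ContinuousOn L (frontier Ω))
    (hexp : ∀ x ∈ frontier Ω, exp (L x) = F x) : ∃ x ∉ closure Ω, F x = 0 := by
  classical
  obtain ⟨L', hL'⟩ := ContinuousMap.exists_restrict_eq isClosed_frontier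
    ⟨(frontier Ω).domRestrict L, hL.domRestrict⟩
  have hL'eq : ∀ x ∈ frontier Ω, L' x = L x := fun x hx =>
    congrFun (congrArg DFunLike.coe hL') ⟨x, hx⟩
  have hcont : Continuous ((closure Ω).piecewise (exp ∘ L') F) :=
    (continuous_exp.comp L'.continuous).piecewise (fun x hx => by
      simp [hL'eq x (frontier_closure_subset hx), hexp x (frontier_closure_subset hx)]) hF
  obtain ⟨x, -, hx⟩ := exists_zero_of_eq_exp_on_circle hcont.continuousOn fun s => by
    simp [hΩ s, hcirc]
  by_cases hxΩ : x ∈ closure Ω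
  · simp [hxΩ, exp_ne_zero] at hx
  · exact ⟨x, hxΩ, by simpa [hxΩ] using hx⟩

theorem exists_zero_mem_connectedComponentIn {F : E2 → ℂ} (hF : Continuous F)
    (hcirc : ∀ s, F (planarCircle s) = exp (s * I)) {W : Set E2} (hW : IsOpen W)
    (hcircW : ∀ s, planarCircle s ∈ W) {L : E2 → ℂ} (hL : ContinuousOn L Wᶜ)
    (hexp : ∀ x ∉ W, exp (L x) = F x) :
    ∃ x ∈ connectedComponentIn W (planarCircle 0), F x = 0 := by
  set U := connectedComponentIn W (planarCircle 0)
  have hcircU : ∀ s, planarCircle s ∈ U := fun s =>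
    (isPreconnected_range continuous_planarCircle).subset_connectedComponentIn ⟨0, rfl⟩
      (range_subset_iff.2 hcircW) ⟨s, rfl⟩
  have hU : U ⊆ interior (closure U) := hW.connectedComponentIn.subset_interior_closure
  have hfr : frontier (closure U)ᶜ ⊆ Wᶜ := fun x hx hxW => by
    rw [frontier_compl] at hx
    exact hx.2 (hU (closure_inter_subset_connectedComponentIn hW _
      ⟨isClosed_closure.frontier_subset hx, hxW⟩))
  by_contra! hF0
  obtain ⟨x, hx, hFx⟩ := exists_zero_of_log_on_frontier hF hcirc (Ω := (closure U)ᶜ)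
    (fun s hs => by rw [closure_compl] at hs; exact hs (hU (hcircU s)))
    (hL.mono hfr) fun x hx => hexp x (hfr hx)
  have hxW : x ∈ W := by_contra fun hxW => exp_ne_zero _ ((hexp x hxW).trans hFx)
  rw [closure_compl, mem_compl_iff, not_not] at hx
  exact hF0 x (closure_inter_subset_connectedComponentIn hW _ ⟨interior_subset hx, hxW⟩) hFx

theorem exists_zero_mem_connectedComponentIn_preimage {G : E2 → E3} (hG : Continuous G)
    {Φ : E3 → ℂ} (hΦ : Continuous Φ) (hcirc : ∀ s, Φ (G (planarCircle s)) = exp (s * I))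
    (k : E3 ≃ₜ E3) (hΦ0 : ∀ y, Φ y = 0 → y ∈ k '' ball 0 1)
    (hcircB : ∀ s, G (planarCircle s) ∈ k '' ball 0 1) :
    ∃ x ∈ connectedComponentIn (G ⁻¹' (k '' ball 0 1)) (planarCircle 0), Φ (G x) = 0 := by
  rw [k.image_eq_preimage_symm] at hΦ0 hcircB ⊢
  obtain ⟨M, hM, hMexp⟩ := exists_continuousOn_log_compl_ball (Φ := Φ ∘ k)
    (hΦ.comp k.continuous).continuousOn fun q hq hq0 => hq (by simpa using hΦ0 _ hq0)
  exact exists_zero_mem_connectedComponentIn (hΦ.comp hG) hcirc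
    ((isOpen_ball.preimage k.symm.continuous).preimage hG) hcircB (L := M ∘ k.symm ∘ G)
    (hM.comp (k.symm.continuous.comp hG).continuousOn fun _ hy => hy)
    fun y hy => by simpa using hMexp (k.symm (G y)) hy

theorem exists_cos_sin_eq {a b : ℝ} (h : a ^ 2 + b ^ 2 = 1) :
    ∃ s : ℝ, Real.cos s = a ∧ Real.sin s = b := by
  obtain ⟨s, hs⟩ := (Complex.norm_eq_one_iff ⟨a, b⟩).1 (by
    rw [Complex.norm_def, Complex.normSq_mk, ← sq, ← sq, h, Real.sqrt_one])
  exact ⟨s, by simpa using congrArg re hs, by simpa using congrArg im hs⟩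

def linkingCoord (y : E3) : ℂ := ((1 - √((y 0 - 1) ^ 2 + y 2 ^ 2) : ℝ) : ℂ) + y 1 * I

theorem continuous_linkingCoord : Continuous linkingCoord := by
  unfold linkingCoord; fun_prop

theorem linkingCoord_eq_zero_iff (y : E3) : linkingCoord y = 0 ↔ y ∈ C2 := by
  simp only [linkingCoord, Complex.ext_iff, add_re, add_im, ofReal_re, ofReal_im, mul_re, mul_im,
    I_re, I_im, zero_re, zero_im]
  constructor
  · rintro ⟨h₁, h₂⟩
    obtain ⟨s, hc, hs⟩ := exists_cos_sin_eq (Real.sqrt_eq_one.1 (by linarith) :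
      (y 0 - 1) ^ 2 + y 2 ^ 2 = 1)
    refine ⟨s, ?_⟩
    ext i
    fin_cases i <;> simp [hc, hs]
    linarith
  · rintro ⟨s, hs⟩
    have h0 : y 0 = 1 + Real.cos s := congrFun hs 0
    have h1 : y 1 = 0 := congrFun hs 1
    have h2 : y 2 = Real.sin s := congrFun hs 2
    simp [h0, h1, h2]

theorem linkingCoord_circle (s : ℝ) :
    linkingCoord (WithLp.toLp 2 ![Real.cos s, Real.sin s, 0]) = exp (s * I) := by
  have : √((Real.cos s - 1) ^ 2) = 1 - Real.cos s := by
    rw [Real.sqrt_sq_eq_abs, abs_of_nonpos (by linarith [Real.cos_le_one s])]; ring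
  simp [linkingCoord, this, exp_mul_I, ← ofReal_cos, ← ofReal_sin]

theorem filling_disk_not_separated_general
    (h : E3 ≃ₜ E3) (γ₁ γ₂ : Set E3) (hγ₁ : γ₁ = h '' C1) (hγ₂ : γ₂ = h '' C2)
    (k : E3 ≃ₜ E3) (B : Set E3) (hB : B = k '' Metric.closedBall 0 1)
    (hint : γ₁ ∪ γ₂ ⊆ interior B)
    (g : E2 → E3) (hg : ContinuousOn g D2)
    (hbd : ∀ s : ℝ, g (WithLp.toLp 2 ![Real.cos s, Real.sin s]) = h (WithLp.toLp 2 ![Real.cos s, Real.sin s, 0])) :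
    (g '' D2 ∩ γ₂).Nonempty ∧
      ∃ S ⊆ g '' D2, IsConnected S ∧ S ∩ frontier B = ∅ ∧
        (S ∩ γ₁).Nonempty ∧ (S ∩ γ₂).Nonempty := by
  set G := g ∘ radialRetraction
  have hG : Continuous G :=
    hg.comp_continuous continuous_radialRetraction radialRetraction_mem_closedBall
  have hGD : ∀ x, G x ∈ g '' D2 := fun x => mem_image_of_mem g (radialRetraction_mem_closedBall x)
  have hGcirc (s : ℝ) : G (planarCircle s) = h (WithLp.toLp 2 ![Real.cos s, Real.sin s, 0]) := by
    rw [show G _ = g _ from rfl,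
      radialRetraction_of_mem_closedBall (planarCircle_mem_closedBall s)]
    exact hbd s
  have hGγ₁ (s : ℝ) : G (planarCircle s) ∈ γ₁ := hγ₁ ▸ hGcirc s ▸ mem_image_of_mem h ⟨s, rfl⟩
  have hintB : interior B = k '' ball 0 1 := by
    rw [hB, ← k.image_interior, interior_closedBall _ one_ne_zero]
  have hΦ (y : E3) : linkingCoord (h.symm y) = 0 ↔ y ∈ γ₂ := by
    rw [hγ₂, h.image_eq_preimage_symm]
    exact linkingCoord_eq_zero_iff _
  have hγ₁W (s : ℝ) : planarCircle s ∈ G ⁻¹' interior B := hint (Or.inl (hGγ₁ s))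
  obtain ⟨x, hxU, hx0⟩ := exists_zero_mem_connectedComponentIn_preimage hG
    (continuous_linkingCoord.comp h.symm.continuous) (fun s => by simp [hGcirc, linkingCoord_circle])
    k (fun y hy => hintB ▸ hint (Or.inr ((hΦ y).1 hy))) (fun s => hintB ▸ hγ₁W s)
  rw [← hintB] at hxU
  have hUB : G '' connectedComponentIn (G ⁻¹' interior B) (planarCircle 0) ⊆ interior B :=
    image_subset_iff.2 (connectedComponentIn_subset _ _)
  exact ⟨⟨G x, hGD x, (hΦ _).1 hx0⟩, _, image_subset_iff.2 fun y _ => hGD y,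
    (isConnected_connectedComponentIn_iff.2 (hγ₁W 0)).image G hG.continuousOn,
    (disjoint_interior_frontier.mono_left hUB).inter_eq,
    ⟨_, mem_image_of_mem G (mem_connectedComponentIn (hγ₁W 0)), hGγ₁ 0⟩,
    ⟨G x, mem_image_of_mem G hxU, (hΦ _).1 hx0⟩⟩

/-- If a Hopf link `(γ₁, γ₂)` lies in the interior of a tamely embedded closed ball `B`,
and `D` is a filling disk of `γ₁`, then `D` meets `γ₂` and `D ∩ ∂B` cannot separate
`γ₁` from `γ₂ ∩ D` inside `D`. -/
theorem filling_disk_not_separated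
    (h : E3 ≃ₜ E3) (γ₁ γ₂ : Set E3) (hγ₁ : γ₁ = h '' C1) (hγ₂ : γ₂ = h '' C2)
    (k : E3 ≃ₜ E3) (B : Set E3) (hB : B = k '' Metric.closedBall 0 1)
    (hint : γ₁ ∪ γ₂ ⊆ interior B)
    (g : E2 → E3) (hg : ContinuousOn g D2) (hinj : Set.InjOn g D2)
    (hbd : ∀ s : ℝ, g (WithLp.toLp 2 ![Real.cos s, Real.sin s]) = h (WithLp.toLp 2 ![Real.cos s, Real.sin s, 0])) :
    (g '' D2 ∩ γ₂).Nonempty ∧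
      ∃ S ⊆ g '' D2, IsConnected S ∧ S ∩ frontier B = ∅ ∧
        (S ∩ γ₁).Nonempty ∧ (S ∩ γ₂).Nonempty :=
  filling_disk_not_separated_general h γ₁ γ₂ hγ₁ hγ₂ k B hB hint g hg hbd
end
end
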